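/- Let σ be the Boolean assignment induced by the first n moves of a play of the graph game on (G, C, s, R) (σ(x_l) = true iff the move through G(x_l) used the path through c_l and f_l), and let E be the current edge set after these n moves. Then for every i ∈ {1,…,m}: there exist j ∈ {1,2,3} and e ∈ E with (w_{i,j},e) ∈ R if and only if the clause F_i = (l_{i,1}∨l_{i,2}∨l_{i,3}) evaluates to true under σ. -/

import Mathlib

/-!
The `g`-vertices `g₁, …, g_{n-1}` lie in `C`, so a move from `g_j` (with `j + 1 < n`) is
trapped in `G(x_{j+1})` and must end at `g_{j+1}`; only the move from `g_{n-1}` can leave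
through `g_n` into the formula component. Hence the `l`-th move is the only one that deletes
edges of `G(x_l)`, and it deletes exactly one of `(b_l, e_l)`, `(c_l, f_l)` according to `σ`.
The edge that `R` attaches to the literal `l_{i,j}` therefore survives the first `n` moves iff
`l_{i,j}` is true under `σ`.
-/

namespace PhutballQBF

/-- A literal: a variable `xₗ` (`pos l`) or its negation `¬xₗ` (`neg l`). -/
inductive Lit where
  | pos (l : ℕ)
  | neg (l : ℕ)
deriving DecidableEq

/-- The index of the variable occurring in a literal. -/
def Lit.var : Lit → ℕ
  | .pos l => l
  | .neg l => l

/-- Evaluation of a literal under a Boolean assignment. -/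
def Lit.eval (σ : ℕ → Bool) : Lit → Bool
  | .pos l => σ l
  | .neg l => !(σ l)

/-- Well-formedness of the 3CNF `F = F₁ ∧ ⋯ ∧ F_m`: the literal `l_{i,j}` (for
`1 ≤ i ≤ m`, `1 ≤ j ≤ 3`) mentions one of the variables `x₁, …, xₙ`. -/
def LitWF (n m : ℕ) (lit : ℕ → ℕ → Lit) : Prop :=
  ∀ i j, 1 ≤ i → i ≤ m → 1 ≤ j → j ≤ 3 → 1 ≤ (lit i j).var ∧ (lit i j).var ≤ n

/-- The clause `Fᵢ = (l_{i,1} ∨ l_{i,2} ∨ l_{i,3})` evaluates to true under `σ`. -/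
def ClauseTrue (lit : ℕ → ℕ → Lit) (i : ℕ) (σ : ℕ → Bool) : Prop :=
  ∃ j, 1 ≤ j ∧ j ≤ 3 ∧ (lit i j).eval σ = true

/-- The 3CNF formula `F = F₁ ∧ ⋯ ∧ F_m` evaluates to true under `σ`. -/
def FTrue (lit : ℕ → ℕ → Lit) (m : ℕ) (σ : ℕ → Bool) : Prop :=
  ∀ i, 1 ≤ i → i ≤ m → ClauseTrue lit i σ

/-- `QAux P i k σ`: the quantified statement with `k` variables `x_i, …, x_{i+k-1}`
still to be quantified (existentially when the index is odd, universally when even),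
the remaining variables having the values recorded in `σ`. -/
def QAux (P : (ℕ → Bool) → Prop) : ℕ → ℕ → (ℕ → Bool) → Prop
  | _, 0, σ => P σ
  | i, k + 1, σ =>
      if i % 2 = 1 then ∃ b, QAux P (i + 1) k (Function.update σ i b)
      else ∀ b, QAux P (i + 1) k (Function.update σ i b)

/-- Truth of the restricted quantified Boolean formula
`Q = ∃x₁ ∀x₂ ∃x₃ ⋯ ∀xₙ F(x₁, …, xₙ)`. -/
def QTrue (n m : ℕ) (lit : ℕ → ℕ → Lit) : Prop :=
  QAux (FTrue lit m) 1 n (fun _ => false)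

/-- The vertices of the graph `G` built from `Q` (with natural-number indices;
`g 0` is the extra vertex `g₀`). -/
inductive Vtx where
  | a (i : ℕ) | b (i : ℕ) | c (i : ℕ) | d (i : ℕ) | e (i : ℕ) | f (i : ℕ) | g (i : ℕ)
  | x (i : ℕ) | y (i : ℕ) | z (i : ℕ) | w (i : ℕ) (j : ℕ)
deriving DecidableEq

/-- A directed edge. -/
abbrev Edge := Vtx × Vtx

/-- The edge set `E(G)` of the graph `G` constructed from `Q` (with `n` variables and
`m` clauses): the variable components `G(xᵢ)`, the connecting edges `(gᵢ, aᵢ₊₁)` for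
`i = 0, …, n-1`, the edge `(gₙ, x₁)`, and the formula component `G(F)`. -/
def EG (n m : ℕ) : Set Edge :=
  { p | (∃ i, 1 ≤ i ∧ i ≤ n ∧
          (p = (Vtx.a i, Vtx.b i) ∨ p = (Vtx.a i, Vtx.c i) ∨ p = (Vtx.b i, Vtx.e i) ∨
           p = (Vtx.c i, Vtx.f i) ∨ p = (Vtx.e i, Vtx.d i) ∨ p = (Vtx.f i, Vtx.d i) ∨
           p = (Vtx.d i, Vtx.g i))) ∨
        (∃ i, i ≤ n - 1 ∧ p = (Vtx.g i, Vtx.a (i + 1))) ∨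
        p = (Vtx.g n, Vtx.x 1) ∨
        (∃ i, 1 ≤ i ∧ i ≤ m ∧
          (p = (Vtx.x i, Vtx.y i) ∨ p = (Vtx.y i, Vtx.z i) ∨ p = (Vtx.z i, Vtx.w i 1) ∨
           p = (Vtx.w i 1, Vtx.w i 2) ∨ p = (Vtx.w i 2, Vtx.w i 3))) ∨
        (∃ i, 1 ≤ i ∧ i ≤ m - 1 ∧ p = (Vtx.x i, Vtx.x (i + 1))) }

/-- The set `C = {g₀, g₁, …, g_{n-1}} ∪ {z₁, …, z_m}`. -/
def Cset (n m : ℕ) : Set Vtx :=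
  { v | (∃ i, i ≤ n - 1 ∧ v = Vtx.g i) ∨ (∃ i, 1 ≤ i ∧ i ≤ m ∧ v = Vtx.z i) }

/-- The relation `R ⊆ V(G) × E(G)`: `(w_{i,j}, (bₗ, eₗ)) ∈ R` iff `l_{i,j} = xₗ`, and
`(w_{i,j}, (cₗ, fₗ)) ∈ R` iff `l_{i,j} = ¬xₗ`. -/
def Rrel (lit : ℕ → ℕ → Lit) (m : ℕ) : Set (Vtx × Edge) :=
  { p | ∃ i j, 1 ≤ i ∧ i ≤ m ∧ 1 ≤ j ∧ j ≤ 3 ∧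
        ((∃ l, lit i j = Lit.pos l ∧ p = (Vtx.w i j, (Vtx.b l, Vtx.e l))) ∨
         (∃ l, lit i j = Lit.neg l ∧ p = (Vtx.w i j, (Vtx.c l, Vtx.f l)))) }

/-- `Rinv R E = R⁻¹(E)`: the vertices pointing some edge of `E`. -/
def Rinv (R : Set (Vtx × Edge)) (E : Set Edge) : Set Vtx :=
  { v | ∃ e ∈ E, (v, e) ∈ R }

/-- The set of (directed) edges traversed by a path given as its list of vertices. -/
def pathEdges (p : List Vtx) : Set Edge := { e | e ∈ p.zip p.tail }

/-- A legal move of the graph game from active vertex `u ∈ C` with current edge set `E`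
along the directed path `p` (a list of at least two pairwise distinct vertices whose
consecutive pairs are edges of `E`), ending at a vertex `v ∈ C ∪ R⁻¹(E)`, with all
internal vertices of `p` outside `C ∪ R⁻¹(E)`; the resulting edge set `E'` is obtained
by deleting the edges of `p` from `E`. -/
def LegalMoveVia (C : Set Vtx) (R : Set (Vtx × Edge))
    (u : Vtx) (E : Set Edge) (v : Vtx) (E' : Set Edge) (p : List Vtx) : Prop :=
  u ∈ C ∧ v ∈ C ∪ Rinv R E ∧
  2 ≤ p.length ∧ p.Nodup ∧
  p.head? = some u ∧ p.getLast? = some v ∧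
  List.Chain' (fun a b => (a, b) ∈ E) p ∧
  (∀ w ∈ (p.drop 1).dropLast, w ∉ C ∪ Rinv R E) ∧
  E' = E \ pathEdges p

/-- A legal move from `(u, E)` to `(v, E')` (along some path). -/
def LegalMove (C : Set Vtx) (R : Set (Vtx × Edge))
    (u : Vtx) (E : Set Edge) (v : Vtx) (E' : Set Edge) : Prop :=
  ∃ p, LegalMoveVia C R u E v E' p

/-- `MoverWins C R true u E` says that the player to move at the position with active
vertex `u` and current edge set `E` has a winning strategy; `MoverWins C R false u E`
says that the player to move loses whatever he does (in particular, if he has no legal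
move he loses immediately; a move to a vertex of `R⁻¹(E)` wins the game for the mover). -/
inductive MoverWins (C : Set Vtx) (R : Set (Vtx × Edge)) : Bool → Vtx → Set Edge → Prop
  | winsNow {u E v E'} : LegalMove C R u E v E' → v ∈ Rinv R E →
      MoverWins C R true u E
  | winsLater {u E v E'} : LegalMove C R u E v E' → MoverWins C R false v E' →
      MoverWins C R true u E
  | loses {u E} :
      (∀ v E', LegalMove C R u E v E' → v ∉ Rinv R E) →
      (∀ v E', LegalMove C R u E v E' → MoverWins C R true v E') →
      MoverWins C R false u E

/-- The two players of the graph game. -/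
inductive Player where
  | ex | fa
deriving DecidableEq

/-- The opponent of a player. -/
def Player.other : Player → Player
  | .ex => .fa
  | .fa => .ex

/-- A (maximal) play of the graph game on `(G, C, s, R)` starting from active vertex `s`
and edge set `E0`, with the ∃-player moving first.  `act k` and `edg k` are the active
vertex and edge set after `k` moves, `turn k` is the player who makes the `(k+1)`-st
move, and `len` is the total number of moves.  The play stops either because its last
move reached a vertex of `R⁻¹(E)` (the mover wins) or because the player to move has no
legal move (he loses); before that, no move may end in `R⁻¹(E)` without stopping. -/
structure Play (C : Set Vtx) (R : Set (Vtx × Edge)) (s : Vtx) (E0 : Set Edge) where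
  len : ℕ
  act : ℕ → Vtx
  edg : ℕ → Set Edge
  turn : ℕ → Player
  init_act : act 0 = s
  init_edg : edg 0 = E0
  init_turn : turn 0 = Player.ex
  turn_alt : ∀ k, turn (k + 1) = (turn k).other
  step : ∀ k, k < len → LegalMove C R (act k) (edg k) (act (k + 1)) (edg (k + 1))
  not_over : ∀ k, k + 1 < len → act (k + 1) ∉ Rinv R (edg k)
  maximal : (0 < len ∧ act len ∈ Rinv R (edg (len - 1))) ∨
            (∀ v E', ¬ LegalMove C R (act len) (edg len) v E')

/-- The vertices a move starting at `g j` can visit: `G(x_{j+1})` together with `g j` and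
`g (j+1)`, and, when `g (j+1) = g n` lies outside `C`, also the formula component. -/
def MoveSpan (n j : ℕ) : Vtx → Prop
  | .g l => l = j ∨ l = j + 1
  | .a l | .b l | .c l | .d l | .e l | .f l => l = j + 1
  | .x _ | .y _ | .z _ | .w _ _ => j + 1 = n

def Lit.edge : Lit → Edge
  | .pos l => (Vtx.b l, Vtx.e l)
  | .neg l => (Vtx.c l, Vtx.f l)

lemma Lit.edge_mem_EG {n m : ℕ} {L : Lit} (h1 : 1 ≤ L.var) (h2 : L.var ≤ n) :
    L.edge ∈ EG n m := by
  cases L <;> simp_all [Lit.edge, Lit.var, EG]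

lemma Lit.moveSpan_edge_fst_iff {n j : ℕ} {L : Lit} : MoveSpan n j L.edge.1 ↔ L.var = j + 1 := by
  cases L <;> rfl

lemma mem_Rrel_w_iff {lit : ℕ → ℕ → Lit} {m i j : ℕ} {e : Edge} :
    (Vtx.w i j, e) ∈ Rrel lit m ↔ 1 ≤ i ∧ i ≤ m ∧ 1 ≤ j ∧ j ≤ 3 ∧ e = (lit i j).edge := by
  unfold Rrel
  cases h : lit i j <;> aesop (add norm Lit.edge)

lemma moveSpan_of_mem_EG {n m j : ℕ} (hj : j < n) {u v : Vtx} (huv : (u, v) ∈ EG n m)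
    (hu : MoveSpan n j u) (hC : u = Vtx.g j ∨ u ∉ Cset n m) : MoveSpan n j v := by
  rcases huv with ⟨i, -, -, h | h | h | h | h | h | h⟩ | ⟨i, hi, h⟩ | h |
      ⟨i, -, -, h | h | h | h | h⟩ | ⟨i, -, -, h⟩ <;>
    obtain ⟨rfl, rfl⟩ := Prod.mk.inj h
  all_goals simp_all [MoveSpan, Cset]
  all_goals omega

section LegalMove

variable {C : Set Vtx} {R : Set (Vtx × Edge)} {u v : Vtx} {E E' : Set Edge} {p : List Vtx}

lemma LegalMoveVia.target_ne_source (h : LegalMoveVia C R u E v E' p) : v ≠ u := by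
  obtain ⟨-, -, hlen, hnd, hhead, hlast, -⟩ := h
  obtain ⟨l, rfl⟩ := List.head?_eq_some_iff.mp hhead
  have hl : l ≠ [] := by rintro rfl; simp at hlen
  rw [List.getLast?_cons, List.getLast?_eq_some_getLast hl] at hlast
  rintro rfl
  exact (List.nodup_cons.mp hnd).1 (Option.some_injective _ hlast ▸ List.getLast_mem hl)

lemma LegalMoveVia.forall_mem_of_closed (h : LegalMoveVia C R u E v E' p) {S : Vtx → Prop}
    (hu : S u) (hS : ∀ x y, x = u ∨ x ∉ C ∪ Rinv R E → (x, y) ∈ E → S x → S y) :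
    ∀ x ∈ p, S x := by
  obtain ⟨-, -, -, -, hhead, -, hchain, hint, -⟩ := h
  obtain ⟨l, rfl⟩ := List.head?_eq_some_iff.mp hhead
  have hsrc : ∀ x ∈ (u :: l).dropLast, x = u ∨ x ∉ C ∪ Rinv R E := by
    intro x hx
    cases l with
    | nil => simp at hx
    | cons b l =>
      rw [List.dropLast_cons_cons, List.mem_cons] at hx
      exact hx.imp_right (hint x)
  have hchain' : (u :: l).IsChain fun x y => (x = u ∨ x ∉ C ∪ Rinv R E) ∧ (x, y) ∈ E :=
    List.isChain_iff_forall₂.mpr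
      ((List.forall₂_and_left _ _).mpr ⟨hsrc, List.isChain_iff_forall₂.mp hchain⟩)
  exact hchain'.induction S _ (fun x y hxy => hS x y hxy.1 hxy.2) fun _ => hu

lemma LegalMove.subset (h : LegalMove C R u E v E') : E' ⊆ E := by
  obtain ⟨p, -, -, -, -, -, -, -, -, rfl⟩ := h
  exact Set.sdiff_subset

end LegalMove

section MoveFromG

variable {n m j : ℕ} {lit : ℕ → ℕ → Lit} {R : Set (Vtx × Edge)} {v : Vtx} {E E' : Set Edge}

lemma LegalMoveVia.forall_mem_moveSpan {p : List Vtx} (hE : E ⊆ EG n m) (hj : j < n)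
    (h : LegalMoveVia (Cset n m) R (Vtx.g j) E v E' p) : ∀ x ∈ p, MoveSpan n j x :=
  h.forall_mem_of_closed (Or.inl rfl) fun _ _ hx hxy hS =>
    moveSpan_of_mem_EG hj (hE hxy) hS (hx.imp_right fun hC => hC ∘ Or.inl)

/-- Before the last variable, `g (j+1) ∈ C` blocks the way, so a move from `g j` stops there. -/
lemma LegalMove.target_eq (hE : E ⊆ EG n m) (hj : j + 2 ≤ n)
    (h : LegalMove (Cset n m) (Rrel lit m) (Vtx.g j) E v E') : v = Vtx.g (j + 1) := by
  obtain ⟨p, hp⟩ := h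
  have hspan := hp.forall_mem_moveSpan hE (by omega)
  have hne := hp.target_ne_source
  obtain ⟨-, hv, -, -, -, hlast, -⟩ := hp
  replace hspan := hspan v (List.mem_of_getLast? hlast)
  rcases hv with (⟨i, -, rfl⟩ | ⟨i, -, -, rfl⟩) | ⟨e, -, i', j', -, -, -, -, hw | hw⟩
  · simp_all [MoveSpan]
  · simp only [MoveSpan] at hspan; omega
  all_goals
    obtain ⟨l, -, he⟩ := hw
    cases congrArg Prod.fst he
    simp only [MoveSpan] at hspan; omega

lemma LegalMove.mem_iff_of_not_moveSpan (hE : E ⊆ EG n m) (hj : j < n)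
    (h : LegalMove (Cset n m) R (Vtx.g j) E v E') {e : Edge} (he : ¬ MoveSpan n j e.1) :
    e ∈ E' ↔ e ∈ E := by
  obtain ⟨p, hp⟩ := h
  have hspan := hp.forall_mem_moveSpan hE hj
  obtain ⟨-, -, -, -, -, -, -, -, rfl⟩ := hp
  exact ⟨fun he' => he'.1, fun he' => ⟨he', fun hpath => he (hspan _ (List.of_mem_zip hpath).1)⟩⟩

end MoveFromG

lemma Play.edg_subset {C : Set Vtx} {R : Set (Vtx × Edge)} {s : Vtx} {E0 : Set Edge}
    (P : Play C R s E0) : ∀ k ≤ P.len, P.edg k ⊆ E0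
  | 0, _ => P.init_edg.le
  | k + 1, hk => ((P.step k hk).subset).trans (P.edg_subset k (by omega))

section PlayPrefix

variable {n m : ℕ} {lit : ℕ → ℕ → Lit} (P : Play (Cset n m) (Rrel lit m) (Vtx.g 0) (EG n m))
  (hlen : n ≤ P.len)
include hlen

lemma Play.act_eq_g (k : ℕ) (hk : k < n) : P.act k = Vtx.g k := by
  induction k with
  | zero => exact P.init_act
  | succ k ih =>
    have hmove := P.step k (by omega)
    rw [ih (by omega)] at hmove
    exact hmove.target_eq (P.edg_subset k (by omega)) hk

lemma Play.mem_edg_iff_of_le {e : Edge} {k₁ k₂ : ℕ} (hk : k₁ ≤ k₂) (hk₂ : k₂ ≤ n)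
    (he : ∀ k, k₁ ≤ k → k < k₂ → ¬ MoveSpan n k e.1) :
    e ∈ P.edg k₂ ↔ e ∈ P.edg k₁ := by
  induction k₂, hk using Nat.le_induction with
  | base => rfl
  | succ k hk ih =>
    have hmove := P.step k (by omega)
    rw [P.act_eq_g hlen k (by omega)] at hmove
    rw [hmove.mem_iff_of_not_moveSpan (P.edg_subset k (by omega)) (by omega)
      (he k hk (by omega)), ih (by omega) fun k' h1 h2 => he k' h1 (by omega)]

/-- The edge lies in `G(x_l)`, which only the `l`-th move can touch. -/
lemma Play.edge_mem_edg_iff_eval {σ : ℕ → Bool}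
    (hσ : ∀ l, 1 ≤ l → l ≤ n →
      (σ l = true ↔ (Vtx.c l, Vtx.f l) ∈ P.edg (l - 1) \ P.edg l) ∧
      (σ l = false ↔ (Vtx.b l, Vtx.e l) ∈ P.edg (l - 1) \ P.edg l))
    {L : Lit} (h1 : 1 ≤ L.var) (h2 : L.var ≤ n) :
    L.edge ∈ P.edg n ↔ L.eval σ = true := by
  have hbefore : L.edge ∈ P.edg (L.var - 1) := by
    rw [P.mem_edg_iff_of_le hlen (Nat.zero_le _) (by omega)
      fun k _ hk => by rw [Lit.moveSpan_edge_fst_iff]; omega, P.init_edg]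
    exact Lit.edge_mem_EG h1 h2
  have hafter : L.edge ∈ P.edg n ↔ L.edge ∈ P.edg L.var :=
    P.mem_edg_iff_of_le hlen h2 le_rfl fun k hk _ => by rw [Lit.moveSpan_edge_fst_iff]; omega
  have hdeleted : L.eval σ = false ↔ L.edge ∈ P.edg (L.var - 1) \ P.edg L.var := by
    rcases L with l | l
    · exact (hσ l h1 h2).2
    · simpa [Lit.eval, Lit.edge, Lit.var] using (hσ l h1 h2).1
  rw [hafter, ← Bool.not_eq_false, hdeleted]
  simp [hbefore]

end PlayPrefix

theorem pointed_edge_iff_clause_true_general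
    (n m : ℕ)
    (lit : ℕ → ℕ → Lit) (hwf : LitWF n m lit)
    (P : Play (Cset n m) (Rrel lit m) (Vtx.g 0) (EG n m))
    (hlen : n ≤ P.len)
    (σ : ℕ → Bool)
    (hσ : ∀ l, 1 ≤ l → l ≤ n →
      (σ l = true ↔ (Vtx.c l, Vtx.f l) ∈ P.edg (l - 1) \ P.edg l) ∧
      (σ l = false ↔ (Vtx.b l, Vtx.e l) ∈ P.edg (l - 1) \ P.edg l)) :
    ∀ i, 1 ≤ i → i ≤ m →
      ((∃ j e, 1 ≤ j ∧ j ≤ 3 ∧ e ∈ P.edg n ∧ (Vtx.w i j, e) ∈ Rrel lit m) ↔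
        ClauseTrue lit i σ) := by
  intro i hi1 hi2
  have hlit : ∀ j, 1 ≤ j → j ≤ 3 → ((lit i j).edge ∈ P.edg n ↔ (lit i j).eval σ = true) :=
    fun j hj1 hj3 => P.edge_mem_edg_iff_eval hlen hσ (hwf i j hi1 hi2 hj1 hj3).1
      (hwf i j hi1 hi2 hj1 hj3).2
  simp only [mem_Rrel_w_iff]
  constructor
  · rintro ⟨j, _, hj1, hj3, he, -, -, -, -, rfl⟩
    exact ⟨j, hj1, hj3, (hlit j hj1 hj3).mp he⟩
  · rintro ⟨j, hj1, hj3, htrue⟩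
    exact ⟨j, _, hj1, hj3, (hlit j hj1 hj3).mpr htrue, hi1, hi2, hj1, hj3, rfl⟩

/-- Let `σ` be the Boolean assignment induced by the first `n` moves of
a play of the graph game on `(G, C, s, R)` (`σ(xₗ) = true` iff the move through `G(xₗ)`
— the `l`-th move — used the path through `cₗ` and `fₗ`, i.e. deleted the edge
`(cₗ, fₗ)`), and let `E = P.edg n` be the current edge set after these `n` moves.  Then
for every `i ∈ {1, …, m}`: there exist `j ∈ {1,2,3}` and `e ∈ E` with `(w_{i,j}, e) ∈ R`
if and only if the clause `Fᵢ = (l_{i,1} ∨ l_{i,2} ∨ l_{i,3})` evaluates to true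
under `σ`. -/
theorem pointed_edge_iff_clause_true
    (n m : ℕ) (hn : Even n) (hn2 : 2 ≤ n) (hm : 1 ≤ m)
    (lit : ℕ → ℕ → Lit) (hwf : LitWF n m lit)
    (P : Play (Cset n m) (Rrel lit m) (Vtx.g 0) (EG n m))
    (hlen : n ≤ P.len)
    (σ : ℕ → Bool)
    (hσ : ∀ l, 1 ≤ l → l ≤ n →
      (σ l = true ↔ (Vtx.c l, Vtx.f l) ∈ P.edg (l - 1) \ P.edg l) ∧
      (σ l = false ↔ (Vtx.b l, Vtx.e l) ∈ P.edg (l - 1) \ P.edg l)) :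
    ∀ i, 1 ≤ i → i ≤ m →
      ((∃ j e, 1 ≤ j ∧ j ≤ 3 ∧ e ∈ P.edg n ∧ (Vtx.w i j, e) ∈ Rrel lit m) ↔
        ClauseTrue lit i σ) :=
  pointed_edge_iff_clause_true_general n m lit hwf P hlen σ hσ

end PhutballQBF
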